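/- arXiv:quant-ph/0601131 — 4 statements merged into one kernel-verified Lean document; each statement's English description precedes it below -/
import Mathlib

section
/- The reachable sets of the adjoint system are Ad_K-invariant: for every k ∈ K and every t ≥ 0, one has k·R₂(1,t)·k⁻¹ = R₂(1,t) and k·closure(R₂(1,t))·k⁻¹ = closure(R₂(1,t)). -/
open Matrix MeasureTheory
open scoped Pointwise

noncomputable section

attribute [local instance] Matrix.normedAddCommGroup Matrix.normedSpace

/-- A trajectory, on the time interval `[0, T]`, of the unreduced system (system 1)
`U̇ = (H_d + Σⱼ vⱼ(s) Hⱼ)·U`, for some bounded measurable control `v : [0,T] → ℝ^m`,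
in integrated form. -/
def IsTrajectoryUnreduced {N m : ℕ} (Hd : Matrix (Fin N) (Fin N) ℂ)
    (H : Fin m → Matrix (Fin N) (Fin N) ℂ) (T : ℝ)
    (U : ℝ → Matrix (Fin N) (Fin N) ℂ) : Prop :=
  ∃ v : ℝ → Fin m → ℝ, Measurable v ∧ (∃ Cb : ℝ, ∀ s ∈ Set.Icc 0 T, ‖v s‖ ≤ Cb) ∧
    ContinuousOn U (Set.Icc 0 T) ∧
    ∀ t ∈ Set.Icc 0 T,
      U t = U 0 + ∫ s in (0:ℝ)..t, (Hd + ∑ j, v s j • H j) * U s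

/-- The reachable set `R₁(x,t)`: all values `U(s)`, `0 ≤ s ≤ t`, of trajectories of the
unreduced system with `U(0) = x`. -/
def reach1 {N m : ℕ} (Hd : Matrix (Fin N) (Fin N) ℂ)
    (H : Fin m → Matrix (Fin N) (Fin N) ℂ) (x : Matrix (Fin N) (Fin N) ℂ) (t : ℝ) :
    Set (Matrix (Fin N) (Fin N) ℂ) :=
  {y | ∃ T U s, IsTrajectoryUnreduced Hd H T U ∧ U 0 = x ∧
    0 ≤ s ∧ s ≤ t ∧ s ≤ T ∧ y = U s}

/-- The adjoint orbit `Ad_K H_d = { k H_d k⁻¹ : k ∈ K }`. -/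
def adOrbit {N : ℕ} (K : Set (Matrix (Fin N) (Fin N) ℂ)) (Hd : Matrix (Fin N) (Fin N) ℂ) :
    Set (Matrix (Fin N) (Fin N) ℂ) :=
  {Y | ∃ k ∈ K, Y = k * Hd * k⁻¹}

/-- A trajectory, on the time interval `[0, T]`, of the adjoint system (system 2)
`Ṗ = X·P` with measurable control `X : [0,T] → Ad_K H_d`, in integrated form. -/
def IsTrajectoryAdjoint {N : ℕ} (K : Set (Matrix (Fin N) (Fin N) ℂ))
    (Hd : Matrix (Fin N) (Fin N) ℂ) (T : ℝ) (P : ℝ → Matrix (Fin N) (Fin N) ℂ) : Prop :=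
  ∃ X : ℝ → Matrix (Fin N) (Fin N) ℂ,
    (∀ i j, Measurable fun s => X s i j) ∧
    (∀ s ∈ Set.Icc 0 T, X s ∈ adOrbit K Hd) ∧
    ContinuousOn P (Set.Icc 0 T) ∧
    ∀ t ∈ Set.Icc 0 T, P t = P 0 + ∫ s in (0:ℝ)..t, X s * P s

/-- The reachable set `R₂(x,t)` of the adjoint system. -/
def reach2 {N : ℕ} (K : Set (Matrix (Fin N) (Fin N) ℂ)) (Hd : Matrix (Fin N) (Fin N) ℂ)
    (x : Matrix (Fin N) (Fin N) ℂ) (t : ℝ) : Set (Matrix (Fin N) (Fin N) ℂ) :=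
  {y | ∃ T P s, IsTrajectoryAdjoint K Hd T P ∧ P 0 = x ∧
    0 ≤ s ∧ s ≤ t ∧ s ≤ T ∧ y = P s}

/-- The approximately reachable set `S₁(x,t) = ∩_{s>t} closure (R₁(x,s))`. -/
def approxReach1 {N m : ℕ} (Hd : Matrix (Fin N) (Fin N) ℂ)
    (H : Fin m → Matrix (Fin N) (Fin N) ℂ) (x : Matrix (Fin N) (Fin N) ℂ) (t : ℝ) :
    Set (Matrix (Fin N) (Fin N) ℂ) :=
  ⋂ s ∈ Set.Ioi t, closure (reach1 Hd H x s)

/-! Conjugation by a unit `k` is a continuous algebra automorphism of the matrix algebra, so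
it commutes with the integral in the integrated form of `Ṗ = X P`: it sends a trajectory with
control `X` to one with control `k X k⁻¹`, which stays in `Ad_K H_d` as soon as `k K ⊆ K`.
Hence it maps `R₂(x,t)` into `R₂(k x k⁻¹, t)`, conjugation by `k⁻¹` gives the reverse
inclusion, and being a homeomorphism it also commutes with closures. -/

namespace Units

variable (R : Type*) {A : Type*} [CommSemiring R] [Ring A] [Algebra R A] [TopologicalSpace A]
  [ContinuousMul A]

def conjContinuousAlgEquiv (u : Aˣ) : A ≃A[R] A where
  toFun y := u * y * ↑u⁻¹
  invFun y := ↑u⁻¹ * y * u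
  left_inv y := by simp [mul_assoc]
  right_inv y := by simp [mul_assoc]
  map_mul' x y := by simp [mul_assoc]
  map_add' x y := by simp [mul_add, add_mul]
  commutes' r := by simp [Algebra.commutes, mul_assoc]
  continuous_toFun := by fun_prop
  continuous_invFun := by fun_prop

@[simp]
theorem conjContinuousAlgEquiv_apply (u : Aˣ) (y : A) :
    conjContinuousAlgEquiv R u y = u * y * ↑u⁻¹ := rfl

theorem conjContinuousAlgEquiv_inv_apply_apply (u : Aˣ) (y : A) :
    conjContinuousAlgEquiv R u⁻¹ (conjContinuousAlgEquiv R u y) = y := by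
  simp [mul_assoc]

end Units

theorem ContinuousLinearEquiv.intervalIntegral_comp_comm {𝕜 E F : Type*} [RCLike 𝕜]
    [NormedAddCommGroup E] [NormedSpace 𝕜 E] [NormedSpace ℝ E]
    [NormedAddCommGroup F] [NormedSpace 𝕜 F] [NormedSpace ℝ F]
    (L : E ≃L[𝕜] F) (f : ℝ → E) (a b : ℝ) :
    ∫ x in a..b, L (f x) = L (∫ x in a..b, f x) := by
  simp only [intervalIntegral, L.integral_comp_comm, map_sub]

section AdjointSystem

variable {N : ℕ} {K : Set (Matrix (Fin N) (Fin N) ℂ)} {Hd : Matrix (Fin N) (Fin N) ℂ}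
  (u : (Matrix (Fin N) (Fin N) ℂ)ˣ)

theorem conj_mem_adOrbit (hu : u • K ⊆ K) {Y : Matrix (Fin N) (Fin N) ℂ}
    (hY : Y ∈ adOrbit K Hd) : Units.conjContinuousAlgEquiv ℂ u Y ∈ adOrbit K Hd := by
  obtain ⟨g, hg, rfl⟩ := hY
  refine ⟨u * g, hu (Set.smul_mem_smul_set hg), ?_⟩
  simp only [Units.conjContinuousAlgEquiv_apply, Matrix.mul_inv_rev, Matrix.coe_units_inv,
    mul_assoc]

theorem IsTrajectoryAdjoint.conj (hu : u • K ⊆ K) {T : ℝ} {P : ℝ → Matrix (Fin N) (Fin N) ℂ}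
    (hP : IsTrajectoryAdjoint K Hd T P) :
    IsTrajectoryAdjoint K Hd T (fun s => Units.conjContinuousAlgEquiv ℂ u (P s)) := by
  obtain ⟨X, hXm, hXK, hPc, hPeq⟩ := hP
  set c := Units.conjContinuousAlgEquiv ℂ u
  refine ⟨fun s => c (X s), fun i j => ?_, fun s hs => conj_mem_adOrbit u hu (hXK s hs),
    c.continuous.comp_continuousOn hPc, fun t ht => ?_⟩
  · simp only [c, Units.conjContinuousAlgEquiv_apply, Matrix.mul_apply]
    fun_prop
  · simp only [← map_mul, hPeq t ht, map_add]
    exact congrArg (c (P 0) + ·)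
      (c.toContinuousLinearEquiv.intervalIntegral_comp_comm (fun s => X s * P s) 0 t).symm

theorem mapsTo_conj_reach2 (hu : u • K ⊆ K) (x : Matrix (Fin N) (Fin N) ℂ) (t : ℝ) :
    Set.MapsTo (Units.conjContinuousAlgEquiv ℂ u) (reach2 K Hd x t)
      (reach2 K Hd (Units.conjContinuousAlgEquiv ℂ u x) t) := by
  rintro _ ⟨T, P, s, hP, rfl, hs0, hst, hsT, rfl⟩
  exact ⟨T, _, s, hP.conj u hu, rfl, hs0, hst, hsT, rfl⟩

theorem image_conj_reach2 (hu : u • K ⊆ K) (hu' : u⁻¹ • K ⊆ K) (x : Matrix (Fin N) (Fin N) ℂ)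
    (t : ℝ) :
    Units.conjContinuousAlgEquiv ℂ u '' reach2 K Hd x t =
      reach2 K Hd (Units.conjContinuousAlgEquiv ℂ u x) t := by
  refine (mapsTo_conj_reach2 u hu x t).image_subset.antisymm fun y hy =>
    ⟨Units.conjContinuousAlgEquiv ℂ u⁻¹ y, ?_, ?_⟩
  · simpa only [Units.conjContinuousAlgEquiv_inv_apply_apply] using
      mapsTo_conj_reach2 u⁻¹ hu' _ t hy
  · simpa only [inv_inv] using Units.conjContinuousAlgEquiv_inv_apply_apply ℂ u⁻¹ y

end AdjointSystem

theorem reach2_adK_invariant_general {N : ℕ}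
    (Hd : Matrix (Fin N) (Fin N) ℂ)
    (K : Set (Matrix (Fin N) (Fin N) ℂ))
    (hKU : K ⊆ (Matrix.unitaryGroup (Fin N) ℂ : Set (Matrix (Fin N) (Fin N) ℂ)))
    (hKmul : ∀ a ∈ K, ∀ b ∈ K, a * b ∈ K)
    (hKinv : ∀ k ∈ K, k⁻¹ ∈ K)
    (k : Matrix (Fin N) (Fin N) ℂ) (hk : k ∈ K) (t : ℝ) :
    (fun y => k * y * k⁻¹) '' reach2 K Hd 1 t = reach2 K Hd 1 t ∧
      (fun y => k * y * k⁻¹) '' closure (reach2 K Hd 1 t) = closure (reach2 K Hd 1 t) := by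
  obtain ⟨u, hu⟩ : IsUnit k := Unitary.isUnit_coe (U := ⟨k, hKU hk⟩)
  have hsmul : ∀ v : (Matrix (Fin N) (Fin N) ℂ)ˣ, ↑v ∈ K → v • K ⊆ K := by
    rintro v hv _ ⟨g, hg, rfl⟩
    exact hKmul _ hv _ hg
  have hconj : (fun y => k * y * k⁻¹) = Units.conjContinuousAlgEquiv ℂ u := by
    ext1 y
    rw [Units.conjContinuousAlgEquiv_apply, Matrix.coe_units_inv, hu]
  have hu' : ↑u⁻¹ ∈ K := by
    rw [Matrix.coe_units_inv, hu]
    exact hKinv k hk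
  have himage : Units.conjContinuousAlgEquiv ℂ u '' reach2 K Hd 1 t = reach2 K Hd 1 t := by
    simpa only [map_one] using image_conj_reach2 u (hsmul u (hu ▸ hk)) (hsmul u⁻¹ hu') 1 t
  rw [hconj]
  refine ⟨himage, ?_⟩
  rw [ContinuousAlgEquiv.image_closure, himage]

/-- **`Ad_K`-invariance of the reachable sets of the adjoint system.**
For every `k ∈ K` and every `t ≥ 0`, `k·R₂(1,t)·k⁻¹ = R₂(1,t)` and
`k·closure(R₂(1,t))·k⁻¹ = closure(R₂(1,t))`. -/
theorem reach2_adK_invariant {N m : ℕ} (hN : 1 ≤ N) (hm : 1 ≤ m)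
    (Hd : Matrix (Fin N) (Fin N) ℂ) (hHd : Hdᴴ = -Hd)
    (H : Fin m → Matrix (Fin N) (Fin N) ℂ) (hH : ∀ j, (H j)ᴴ = -H j)
    (K : Set (Matrix (Fin N) (Fin N) ℂ))
    (hKU : K ⊆ (Matrix.unitaryGroup (Fin N) ℂ : Set (Matrix (Fin N) (Fin N) ℂ)))
    (hK1 : (1 : Matrix (Fin N) (Fin N) ℂ) ∈ K)
    (hKmul : ∀ a ∈ K, ∀ b ∈ K, a * b ∈ K)
    (hKinv : ∀ k ∈ K, k⁻¹ ∈ K)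
    (hKcomp : IsCompact K)
    (hKgen : K = closure (Submonoid.closure
      {g : Matrix (Fin N) (Fin N) ℂ |
        ∃ v : Fin m → ℝ, g = NormedSpace.exp (∑ j, v j • H j)} :
          Set (Matrix (Fin N) (Fin N) ℂ)))
    (k : Matrix (Fin N) (Fin N) ℂ) (hk : k ∈ K) (t : ℝ) (ht : 0 ≤ t) :
    (fun y => k * y * k⁻¹) '' reach2 K Hd 1 t = reach2 K Hd 1 t ∧
      (fun y => k * y * k⁻¹) '' closure (reach2 K Hd 1 t) = closure (reach2 K Hd 1 t) :=
  reach2_adK_invariant_general Hd K hKU hKmul hKinv k hk t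
end
end

section
/- For every x ∈ M_N(ℂ) and every t ≥ 0, the set closure(R₂(x,t)) is compact, and closure(R₂(x,t)) = ∩_{n≥1} closure(R₂(x, t + 1/n)). -/
open Matrix MeasureTheory
open scoped Pointwise

noncomputable section

attribute [local instance] Matrix.normedAddCommGroup Matrix.normedSpace

/-!
Every control takes values in `Ad_K H_d`, which is bounded since `K` consists of unitary
matrices: `‖X(s) P‖ ≤ c ‖P‖` with `c = N³ ‖H_d‖` (each matrix product costs a factor `N` in the
entrywise sup norm). Grönwall's inequality gives `‖P(s)‖ ≤ ‖x‖ e^{cs}`, so `R₂(x,t)` is bounded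
and its closure is compact. The same bound makes trajectories Lipschitz in time, and stopping a
trajectory at time `min(s,t)` shows that `R₂(x,t+δ)` lies in the closed `O(δ)`-thickening of
`R₂(x,t)`; as `δ → 0` these thickenings shrink to `closure(R₂(x,t))`.
-/

open Set Filter Topology

section IntegralEquation

variable {E : Type*} [NormedAddCommGroup E] [NormedSpace ℝ E]

theorem norm_le_mul_exp_of_eq_integral {P G : ℝ → E} {T C : ℝ} (hC : 0 ≤ C)
    (hP : ContinuousOn P (Icc 0 T)) (hG : ∀ s ∈ Icc 0 T, ‖G s‖ ≤ C * ‖P s‖)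
    (heq : ∀ u ∈ Icc 0 T, P u = P 0 + ∫ s in (0 : ℝ)..u, G s) :
    ∀ u ∈ Icc 0 T, ‖P u‖ ≤ ‖P 0‖ * Real.exp (C * u) := by
  intro u hu
  have hT : 0 ≤ T := hu.1.trans hu.2
  -- Grönwall's inequality needs a differentiable majorant: integrate a continuous extension of `P`.
  set Q : ℝ → E := fun s => P (projIcc 0 T hT s)
  have hQ : Continuous Q :=
    hP.comp_continuous (continuous_subtype_val.comp continuous_projIcc) fun s => Subtype.prop _
  have hQP : ∀ s ∈ Icc 0 T, Q s = P s := fun s hs => by simp only [Q, projIcc_of_mem hT hs]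
  set F : ℝ → ℝ := fun u => ‖P 0‖ + ∫ s in (0 : ℝ)..u, C * ‖Q s‖
  have hgc : Continuous fun s => C * ‖Q s‖ := by fun_prop
  have hF : ∀ u, HasDerivAt F (C * ‖Q u‖) u := fun u =>
    (hgc.integral_hasStrictDerivAt 0 u).hasDerivAt.const_add _
  have hPF : ∀ u ∈ Icc 0 T, ‖P u‖ ≤ F u := by
    intro u hu
    rw [heq u hu]
    refine (norm_add_le _ _).trans (add_le_add_right ?_ _)
    refine intervalIntegral.norm_integral_le_of_norm_le hu.1
      (ae_of_all _ fun s hs => ?_) (hgc.intervalIntegrable _ _)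
    have hs' : s ∈ Icc 0 T := ⟨hs.1.le, hs.2.trans hu.2⟩
    rw [hQP s hs']
    exact hG s hs'
  have hFbound := le_gronwallBound_of_liminf_deriv_right_le (ε := 0)
    (fun s _ => (hF s).continuousAt.continuousWithinAt)
    (fun s _ _ hr => (hF s).hasDerivWithinAt.liminf_right_slope_le hr) (le_refl (F 0))
    (fun s hs => by
      rw [add_zero, hQP s (Ico_subset_Icc_self hs)]
      exact mul_le_mul_of_nonneg_left (hPF s (Ico_subset_Icc_self hs)) hC) u hu
  simpa [F, gronwallBound_ε0] using (hPF u hu).trans hFbound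

theorem norm_sub_le_of_eq_integral {P G : ℝ → E} {a b L : ℝ} (ha : 0 ≤ a) (hab : a ≤ b)
    (hG : IntegrableOn G (Icc 0 b)) (hGL : ∀ s ∈ Ioc a b, ‖G s‖ ≤ L)
    (hPa : P a = P 0 + ∫ s in (0 : ℝ)..a, G s) (hPb : P b = P 0 + ∫ s in (0 : ℝ)..b, G s) :
    ‖P b - P a‖ ≤ L * (b - a) := by
  have hG0b : IntervalIntegrable G volume 0 b :=
    (intervalIntegrable_iff_integrableOn_Icc_of_le (ha.trans hab)).2 hG
  have hG0a : IntervalIntegrable G volume 0 a := hG0b.mono_set <| by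
    rw [uIcc_of_le ha, uIcc_of_le (ha.trans hab)]
    exact Icc_subset_Icc_right hab
  rw [hPa, hPb, add_sub_add_left_eq_sub, intervalIntegral.integral_interval_sub_left hG0b hG0a,
    ← abs_of_nonneg (sub_nonneg.2 hab)]
  exact intervalIntegral.norm_integral_le_of_norm_le_const fun s hs =>
    hGL s (by rwa [uIoc_of_le hab] at hs)

end IntegralEquation

theorem Matrix.norm_mul_le_card_mul {l m n α : Type*} [Fintype l] [Fintype m] [Fintype n]
    [NonUnitalNormedRing α] (A : Matrix l m α) (B : Matrix m n α) :
    ‖A * B‖ ≤ Fintype.card m * ‖A‖ * ‖B‖ := by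
  refine (Matrix.norm_le_iff (by positivity)).2 fun i j => ?_
  calc ‖(A * B) i j‖ ≤ ∑ k, ‖A i k‖ * ‖B k j‖ :=
        (norm_sum_le _ _).trans (Finset.sum_le_sum fun k _ => norm_mul_le _ _)
    _ ≤ ∑ _k : m, ‖A‖ * ‖B‖ := by
        gcongr <;> exact Matrix.norm_entry_le_entrywise_sup_norm _
    _ = Fintype.card m * ‖A‖ * ‖B‖ := by simp [mul_assoc]

theorem Matrix.norm_inv_le_one_of_mem_unitaryGroup {n 𝕜 : Type*} [Fintype n] [DecidableEq n]
    [RCLike 𝕜] {U : Matrix n n 𝕜} (hU : U ∈ unitaryGroup n 𝕜) : ‖U⁻¹‖ ≤ 1 := by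
  rw [Matrix.inv_eq_left_inv (Matrix.mem_unitaryGroup_iff'.1 hU)]
  exact entrywise_sup_norm_bound_of_unitary (Unitary.star_mem hU)

theorem norm_mul_le_of_mem_adOrbit {N : ℕ} {K : Set (Matrix (Fin N) (Fin N) ℂ)}
    (hKU : K ⊆ (Matrix.unitaryGroup (Fin N) ℂ : Set (Matrix (Fin N) (Fin N) ℂ)))
    {Hd Y : Matrix (Fin N) (Fin N) ℂ} (hY : Y ∈ adOrbit K Hd) (p : Matrix (Fin N) (Fin N) ℂ) :
    ‖Y * p‖ ≤ N ^ 3 * ‖Hd‖ * ‖p‖ := by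
  obtain ⟨k, hk, rfl⟩ := hY
  have hmul (A B : Matrix (Fin N) (Fin N) ℂ) : ‖A * B‖ ≤ N * ‖A‖ * ‖B‖ := by
    simpa using Matrix.norm_mul_le_card_mul A B
  have hkHd : ‖k * Hd * k⁻¹‖ ≤ N ^ 2 * ‖Hd‖ :=
    calc ‖k * Hd * k⁻¹‖ ≤ N * ‖k * Hd‖ * ‖k⁻¹‖ := hmul _ _
      _ ≤ N * (N * ‖k‖ * ‖Hd‖) * ‖k⁻¹‖ := by gcongr; exact hmul _ _
      _ ≤ N * (N * 1 * ‖Hd‖) * 1 := by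
          gcongr
          · exact entrywise_sup_norm_bound_of_unitary (hKU hk)
          · exact Matrix.norm_inv_le_one_of_mem_unitaryGroup (hKU hk)
      _ = N ^ 2 * ‖Hd‖ := by ring
  calc ‖k * Hd * k⁻¹ * p‖ ≤ N * ‖k * Hd * k⁻¹‖ * ‖p‖ := hmul _ _
    _ ≤ N * (N ^ 2 * ‖Hd‖) * ‖p‖ := by gcongr
    _ = N ^ 3 * ‖Hd‖ * ‖p‖ := by ring

theorem Metric.iInter_closure_subset_closure_of_subset_cthickening {α ι : Type*}
    [PseudoMetricSpace α] {l : Filter ι} [l.NeBot] {s : Set α} {u : ι → Set α} {δ : ι → ℝ}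
    (hδ : Tendsto δ l (𝓝 0)) (hu : ∀ i, u i ⊆ cthickening (δ i) s) :
    ⋂ i, closure (u i) ⊆ closure s := by
  rw [closure_eq_iInter_cthickening]
  refine subset_iInter₂ fun ε hε => ?_
  obtain ⟨i, hi⟩ := (hδ.eventually (gt_mem_nhds hε)).exists
  exact (iInter_subset _ i).trans
    (closure_minimal ((hu i).trans (cthickening_mono hi.le s)) isClosed_cthickening)

namespace IsTrajectoryAdjoint

variable {N : ℕ} {K : Set (Matrix (Fin N) (Fin N) ℂ)} {Hd : Matrix (Fin N) (Fin N) ℂ} {T : ℝ}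
  {P : ℝ → Matrix (Fin N) (Fin N) ℂ}

theorem norm_le (hKU : K ⊆ (Matrix.unitaryGroup (Fin N) ℂ : Set (Matrix (Fin N) (Fin N) ℂ)))
    (hP : IsTrajectoryAdjoint K Hd T P) {u : ℝ} (hu : u ∈ Icc 0 T) :
    ‖P u‖ ≤ ‖P 0‖ * Real.exp (N ^ 3 * ‖Hd‖ * u) := by
  obtain ⟨X, -, hXK, hPc, heq⟩ := hP
  exact norm_le_mul_exp_of_eq_integral (by positivity) hPc
    (fun s hs => norm_mul_le_of_mem_adOrbit hKU (hXK s hs) (P s)) heq u hu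

theorem norm_sub_le (hKU : K ⊆ (Matrix.unitaryGroup (Fin N) ℂ : Set (Matrix (Fin N) (Fin N) ℂ)))
    (hP : IsTrajectoryAdjoint K Hd T P) {a b : ℝ} (ha : 0 ≤ a) (hab : a ≤ b) (hbT : b ≤ T) :
    ‖P b - P a‖ ≤ N ^ 3 * ‖Hd‖ * (‖P 0‖ * Real.exp (N ^ 3 * ‖Hd‖ * b)) * (b - a) := by
  have hPle : ∀ u ∈ Icc 0 T, _ := fun u hu => hP.norm_le hKU hu
  obtain ⟨X, hXm, hXK, hPc, heq⟩ := hP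
  have hbound : ∀ s ∈ Icc 0 b,
      ‖X s * P s‖ ≤ N ^ 3 * ‖Hd‖ * (‖P 0‖ * Real.exp (N ^ 3 * ‖Hd‖ * b)) := fun s hs =>
    have hsT : s ∈ Icc 0 T := ⟨hs.1, hs.2.trans hbT⟩
    (norm_mul_le_of_mem_adOrbit hKU (hXK s hsT) _).trans
      (by gcongr; exact (hPle s hsT).trans (by gcongr; exact hs.2))
  -- Matrices carry no measurable structure, and their norm instances do not yield
  -- `PseudoMetrizableSpace` by instance search: measurability is proved on `Fin N → Fin N → ℂ`.
  have hX : AEStronglyMeasurable (fun s => (X s : Fin N → Fin N → ℂ)) volume :=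
    (measurable_pi_iff.2 fun i => measurable_pi_iff.2 fun j => hXm i j).aestronglyMeasurable
  have hPm : AEStronglyMeasurable (fun s => (P s : Fin N → Fin N → ℂ))
      (volume.restrict (Icc 0 b)) :=
    ContinuousOn.aestronglyMeasurable (β := Fin N → Fin N → ℂ)
      (hPc.mono (Icc_subset_Icc_right hbT)) measurableSet_Icc
  exact norm_sub_le_of_eq_integral ha hab
    (.of_bound measure_Icc_lt_top (AEStronglyMeasurable.mul (f := X) (g := P) hX.restrict hPm) _
      (ae_restrict_of_forall_mem measurableSet_Icc hbound))
    (fun s hs => hbound s ⟨ha.trans hs.1.le, hs.2⟩)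
    (heq a ⟨ha, hab.trans hbT⟩) (heq b ⟨ha.trans hab, hbT⟩)

end IsTrajectoryAdjoint

section Reach2

variable {N : ℕ} {K : Set (Matrix (Fin N) (Fin N) ℂ)} {Hd x : Matrix (Fin N) (Fin N) ℂ}

theorem reach2_mono : Monotone (reach2 K Hd x) := by
  rintro t t' htt' y ⟨T, P, s, hP, hP0, hs0, hst, hsT, rfl⟩
  exact ⟨T, P, s, hP, hP0, hs0, hst.trans htt', hsT, rfl⟩

theorem norm_le_of_mem_reach2
    (hKU : K ⊆ (Matrix.unitaryGroup (Fin N) ℂ : Set (Matrix (Fin N) (Fin N) ℂ)))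
    {t : ℝ} {y : Matrix (Fin N) (Fin N) ℂ} (hy : y ∈ reach2 K Hd x t) :
    ‖y‖ ≤ ‖x‖ * Real.exp (N ^ 3 * ‖Hd‖ * t) := by
  obtain ⟨T, P, s, hP, rfl, hs0, hst, hsT, rfl⟩ := hy
  exact (hP.norm_le hKU ⟨hs0, hsT⟩).trans (by gcongr)

theorem isCompact_closure_reach2
    (hKU : K ⊆ (Matrix.unitaryGroup (Fin N) ℂ : Set (Matrix (Fin N) (Fin N) ℂ))) (t : ℝ) :
    IsCompact (closure (reach2 K Hd x t)) :=
  (isBounded_iff_forall_norm_le.2 ⟨_, fun _ hy => norm_le_of_mem_reach2 hKU hy⟩).isCompact_closure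

theorem reach2_subset_cthickening
    (hKU : K ⊆ (Matrix.unitaryGroup (Fin N) ℂ : Set (Matrix (Fin N) (Fin N) ℂ)))
    {t t' : ℝ} (ht : 0 ≤ t) (htt' : t ≤ t') :
    reach2 K Hd x t' ⊆ Metric.cthickening
      (N ^ 3 * ‖Hd‖ * (‖x‖ * Real.exp (N ^ 3 * ‖Hd‖ * t')) * (t' - t)) (reach2 K Hd x t) := by
  rintro y ⟨T, P, s, hP, hP0, hs0, hst, hsT, rfl⟩
  have hstop : P (min s t) ∈ reach2 K Hd x t :=
    ⟨T, P, min s t, hP, hP0, le_min hs0 ht, min_le_right _ _, (min_le_left _ _).trans hsT, rfl⟩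
  refine Metric.mem_cthickening_of_dist_le _ _ _ _ hstop ?_
  rw [dist_eq_norm, ← hP0]
  refine (hP.norm_sub_le hKU (le_min hs0 ht) (min_le_left _ _) hsT).trans ?_
  have hgap : s - min s t ≤ t' - t := by
    rcases le_total s t with h | h <;> simp only [h, min_eq_left, min_eq_right] <;> linarith
  gcongr
  exact sub_nonneg.2 (min_le_left _ _)

end Reach2

theorem closure_reach2_compact_and_iInter_general {N : ℕ}
    (Hd : Matrix (Fin N) (Fin N) ℂ)
    (K : Set (Matrix (Fin N) (Fin N) ℂ))
    (hKU : K ⊆ (Matrix.unitaryGroup (Fin N) ℂ : Set (Matrix (Fin N) (Fin N) ℂ)))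
    (x : Matrix (Fin N) (Fin N) ℂ) (t : ℝ) (ht : 0 ≤ t) :
    IsCompact (closure (reach2 K Hd x t)) ∧
      closure (reach2 K Hd x t) =
        ⋂ n : ℕ, closure (reach2 K Hd x (t + 1 / (n + 1))) := by
  set c : ℝ := N ^ 3 * ‖Hd‖
  have hshrink : Tendsto (fun n : ℕ => c * (‖x‖ * Real.exp (c * (t + 1 / (n + 1)))) *
      (t + 1 / (n + 1) - t)) atTop (𝓝 0) := by
    have hcont : Continuous fun r : ℝ => c * (‖x‖ * Real.exp (c * (t + r))) * (t + r - t) := by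
      fun_prop
    simpa [Function.comp_def] using (hcont.tendsto 0).comp tendsto_one_div_add_atTop_nhds_zero_nat
  have hstep (n : ℕ) : t ≤ t + 1 / (n + 1) := le_add_of_nonneg_right (by positivity)
  refine ⟨isCompact_closure_reach2 hKU t, ?_⟩
  exact (subset_iInter fun n => closure_mono (reach2_mono (hstep n))).antisymm
    (Metric.iInter_closure_subset_closure_of_subset_cthickening hshrink
      fun n => reach2_subset_cthickening hKU ht (hstep n))

/-- **Compactness and outer regularity of the adjoint reachable sets.**
For every `x` and every `t ≥ 0`, `closure(R₂(x,t))` is compact and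
`closure(R₂(x,t)) = ∩_{n ≥ 1} closure(R₂(x, t + 1/n))`. -/
theorem closure_reach2_compact_and_iInter {N m : ℕ} (hN : 1 ≤ N) (hm : 1 ≤ m)
    (Hd : Matrix (Fin N) (Fin N) ℂ) (hHd : Hdᴴ = -Hd)
    (H : Fin m → Matrix (Fin N) (Fin N) ℂ) (hH : ∀ j, (H j)ᴴ = -H j)
    (K : Set (Matrix (Fin N) (Fin N) ℂ))
    (hKU : K ⊆ (Matrix.unitaryGroup (Fin N) ℂ : Set (Matrix (Fin N) (Fin N) ℂ)))
    (hK1 : (1 : Matrix (Fin N) (Fin N) ℂ) ∈ K)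
    (hKmul : ∀ a ∈ K, ∀ b ∈ K, a * b ∈ K)
    (hKinv : ∀ k ∈ K, k⁻¹ ∈ K)
    (hKcomp : IsCompact K)
    (hKgen : K = closure (Submonoid.closure
      {g : Matrix (Fin N) (Fin N) ℂ |
        ∃ v : Fin m → ℝ, g = NormedSpace.exp (∑ j, v j • H j)} :
          Set (Matrix (Fin N) (Fin N) ℂ)))
    (x : Matrix (Fin N) (Fin N) ℂ) (t : ℝ) (ht : 0 ≤ t) :
    IsCompact (closure (reach2 K Hd x t)) ∧
      closure (reach2 K Hd x t) =
        ⋂ n : ℕ, closure (reach2 K Hd x (t + 1 / (n + 1))) :=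
  closure_reach2_compact_and_iInter_general Hd K hKU x t ht
end
end

section
/- The subgroup K is contained in the approximately reachable set at time zero of the unreduced system: K ⊆ S₁(1,0). Consequently, if z ∈ S₁(1,t) for some t ≥ 0, then zk ∈ S₁(1,t) for every k ∈ K. -/
/-!
A constant control `v` gives the trajectory `s ↦ exp (s • (H_d + ∑ vⱼ Hⱼ))`. Running the constant
control `v / τ` for time `τ` reaches `exp (τ • H_d + ∑ vⱼ Hⱼ)`, which tends to `exp (∑ vⱼ Hⱼ)` as
`τ → 0⁺`, so every generator of `K` lies in `S₁(1,0) = ⋂_{ε>0} closure R₁(1,ε)`. The system is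
right-invariant, so following a trajectory from `x` to `y` and then a trajectory from `1` to `z`,
right-translated by `y`, reaches `z * y`; times add. Hence `S₁(1,t) * S₁(x,s) ⊆ S₁(x,s+t)`, and
`S₁(1,0)` is a closed submonoid: it contains the closure `K` of the monoid generated by the
generators, and `S₁(1,t) * K ⊆ S₁(1,t)`.
-/

open Matrix MeasureTheory
open scoped Pointwise

noncomputable section

attribute [local instance] Matrix.normedAddCommGroup Matrix.normedSpace

open Set

section MatrixAnalysis

variable {n : Type*} [Fintype n]

-- The local norm instance `Matrix.normedAddCommGroup` induces `instTopologicalSpaceMatrix` only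
-- up to unfolding, so instance search cannot derive these two through it.
instance : ENormedAddMonoid (Matrix n n ℂ) := NormedAddGroup.toENormedAddMonoid

instance : TopologicalSpace.PseudoMetrizableSpace (Matrix n n ℂ) :=
  inferInstanceAs (TopologicalSpace.PseudoMetrizableSpace (n → n → ℂ))

theorem intervalIntegrable_controlled_mul {m : ℕ} (Hd : Matrix n n ℂ) (H : Fin m → Matrix n n ℂ)
    {v : ℝ → Fin m → ℝ} (hv : Measurable v) {T C : ℝ} (hvC : ∀ s ∈ Icc 0 T, ‖v s‖ ≤ C)
    {U : ℝ → Matrix n n ℂ} (hU : ContinuousOn U (Icc 0 T)) {t : ℝ} (ht : t ∈ Icc 0 T) :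
    IntervalIntegrable (fun s => (Hd + ∑ j, v s j • H j) * U s) volume 0 t := by
  have hsub : Ioc 0 t ⊆ Icc 0 T := fun s hs => ⟨hs.1.le, hs.2.trans ht.2⟩
  let Φ : (Fin m → ℝ) × Matrix n n ℂ → Matrix n n ℂ := fun p => (Hd + ∑ j, p.1 j • H j) * p.2
  have hΦ : Continuous Φ := by fun_prop
  obtain ⟨B, hB⟩ := ((isCompact_closedBall 0 C).prod
    (isCompact_Icc.image_of_continuousOn hU)).exists_bound_of_continuousOn hΦ.continuousOn
  have hmeas : AEStronglyMeasurable (fun s => (v s, U s)) (volume.restrict (Ioc 0 t)) :=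
    hv.aestronglyMeasurable.prodMk ((hU.mono hsub).aestronglyMeasurable measurableSet_Ioc)
  have hΦmeas := hΦ.comp_aestronglyMeasurable hmeas
  rw [intervalIntegrable_iff_integrableOn_Ioc_of_le ht.1]
  refine IntegrableOn.of_bound measure_Ioc_lt_top hΦmeas B ?_
  refine (ae_restrict_iff' measurableSet_Ioc).2 (ae_of_all _ fun s hs => ?_)
  exact hB (v s, U s) ⟨mem_closedBall_zero_iff.2 (hvC s (hsub hs)), mem_image_of_mem U (hsub hs)⟩

variable [DecidableEq n]

-- The operator norm makes matrices a normed algebra; the conclusions only involve the topology.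
theorem Matrix.hasDerivAt_exp_smul_const' (A : Matrix n n ℂ) (t : ℝ) :
    HasDerivAt (fun s : ℝ => NormedSpace.exp (s • A)) (A * NormedSpace.exp (t • A)) t := by
  open scoped Norms.Operator in exact _root_.hasDerivAt_exp_smul_const' A t

theorem Matrix.continuous_exp : Continuous (NormedSpace.exp : Matrix n n ℂ → Matrix n n ℂ) := by
  open scoped Norms.Operator in exact NormedSpace.exp_continuous

end MatrixAnalysis

section Concat

variable {α : Type*} {a b τ : ℝ} {f g : ℝ → α}

def concatAt (a : ℝ) (f g : ℝ → α) (τ : ℝ) : α := if τ ≤ a then f τ else g (τ - a)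

theorem concatAt_of_le (h : τ ≤ a) : concatAt a f g τ = f τ := if_pos h

theorem concatAt_of_lt (h : a < τ) : concatAt a f g τ = g (τ - a) := if_neg h.not_ge

theorem concatAt_of_ge (hfg : f a = g 0) (h : a ≤ τ) : concatAt a f g τ = g (τ - a) := by
  rcases h.eq_or_lt with rfl | h
  · rw [concatAt_of_le le_rfl, sub_self, hfg]
  · exact concatAt_of_lt h

theorem Measurable.concatAt [MeasurableSpace α] (hf : Measurable f) (hg : Measurable g) :
    Measurable (_root_.concatAt a f g) :=
  hf.ite measurableSet_Iic (hg.comp (measurable_id.sub_const a))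

theorem ContinuousOn.concatAt [TopologicalSpace α] (hf : ContinuousOn f (Icc 0 a))
    (hg : ContinuousOn g (Icc 0 b)) (hfg : f a = g 0) :
    ContinuousOn (_root_.concatAt a f g) (Icc 0 (a + b)) := by
  have hleft : ContinuousOn (_root_.concatAt a f g) (Icc 0 a) :=
    hf.congr fun τ hτ => concatAt_of_le hτ.2
  have hright : ContinuousOn (_root_.concatAt a f g) (Icc a (a + b)) := by
    refine (hg.comp (continuousOn_id.sub continuousOn_const) fun τ hτ => ?_).congr
      fun τ hτ => concatAt_of_ge hfg hτ.1
    exact ⟨sub_nonneg.2 hτ.1, by simpa [add_comm] using hτ.2⟩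
  refine (hleft.union_of_isClosed hright isClosed_Icc isClosed_Icc).mono fun τ hτ => ?_
  rcases le_total τ a with h | h
  exacts [Or.inl ⟨hτ.1, h⟩, Or.inr ⟨h, hτ.2⟩]

theorem norm_concatAt_le [Norm α] {C : ℝ} (hf : ∀ τ ∈ Icc 0 a, ‖f τ‖ ≤ C)
    (hg : ∀ τ ∈ Icc 0 b, ‖g τ‖ ≤ C) : ∀ τ ∈ Icc 0 (a + b), ‖concatAt a f g τ‖ ≤ C := by
  intro τ hτ
  rcases le_or_gt τ a with h | h
  · rw [concatAt_of_le h]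
    exact hf τ ⟨hτ.1, h⟩
  · rw [concatAt_of_lt h]
    exact hg _ ⟨sub_nonneg.2 h.le, by linarith [hτ.2]⟩

end Concat

section Trajectory

variable {N m : ℕ} {Hd : Matrix (Fin N) (Fin N) ℂ} {H : Fin m → Matrix (Fin N) (Fin N) ℂ}

variable (Hd H) in
theorem isTrajectoryUnreduced_exp (v : Fin m → ℝ) (T : ℝ) :
    IsTrajectoryUnreduced Hd H T fun s => NormedSpace.exp (s • (Hd + ∑ j, v j • H j)) := by
  set A := Hd + ∑ j, v j • H j
  have hcont : Continuous fun s : ℝ => NormedSpace.exp (s • A) :=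
    Matrix.continuous_exp.comp (continuous_id.smul continuous_const)
  refine ⟨fun _ => v, measurable_const, ⟨‖v‖, fun _ _ => le_rfl⟩, hcont.continuousOn,
    fun t _ => ?_⟩
  rw [intervalIntegral.integral_eq_sub_of_hasDerivAt
    (fun s _ => Matrix.hasDerivAt_exp_smul_const' A s)
    ((continuous_const.mul hcont).intervalIntegrable _ _)]
  abel

theorem IsTrajectoryUnreduced.mono {T T' : ℝ} {U : ℝ → Matrix (Fin N) (Fin N) ℂ}
    (hU : IsTrajectoryUnreduced Hd H T U) (hT : T' ≤ T) : IsTrajectoryUnreduced Hd H T' U := by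
  obtain ⟨v, hvm, ⟨C, hC⟩, hUc, hUeq⟩ := hU
  have hsub : Icc (0 : ℝ) T' ⊆ Icc 0 T := Icc_subset_Icc_right hT
  exact ⟨v, hvm, ⟨C, fun s hs => hC s (hsub hs)⟩, hUc.mono hsub, fun t ht => hUeq t (hsub ht)⟩

theorem IsTrajectoryUnreduced.mul_const {T : ℝ} {U : ℝ → Matrix (Fin N) (Fin N) ℂ}
    (hU : IsTrajectoryUnreduced Hd H T U) (y : Matrix (Fin N) (Fin N) ℂ) : IsTrajectoryUnreduced Hd H T fun s => U s * y := by
  obtain ⟨v, hvm, ⟨C, hC⟩, hUc, hUeq⟩ := hU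
  refine ⟨v, hvm, ⟨C, hC⟩, hUc.mul continuousOn_const, fun t ht => ?_⟩
  have hint := intervalIntegrable_controlled_mul Hd H hvm hC hUc ht
  simp only [← mul_assoc]
  rw [hUeq t ht, add_mul]
  congr 1
  exact ((LinearMap.mulRight ℝ y).toContinuousLinearMap.intervalIntegral_comp_comm hint).symm

theorem IsTrajectoryUnreduced.concatAt {a b : ℝ} {W V : ℝ → Matrix (Fin N) (Fin N) ℂ}
    (hW : IsTrajectoryUnreduced Hd H a W) (hV : IsTrajectoryUnreduced Hd H b V) (ha : 0 ≤ a)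
    (hWV : W a = V 0) : IsTrajectoryUnreduced Hd H (a + b) (_root_.concatAt a W V) := by
  obtain ⟨w, hwm, ⟨Cw, hCw⟩, hWc, hWeq⟩ := hW
  obtain ⟨v, hvm, ⟨Cv, hCv⟩, hVc, hVeq⟩ := hV
  have hu : ∀ s ∈ Icc 0 (a + b), ‖_root_.concatAt a w v s‖ ≤ max Cw Cv :=
    norm_concatAt_le (fun s hs => (hCw s hs).trans (le_max_left _ _))
      (fun s hs => (hCv s hs).trans (le_max_right _ _))
  have hUc := hWc.concatAt hVc hWV
  refine ⟨_root_.concatAt a w v, hwm.concatAt hvm, ⟨_, hu⟩, hUc, fun t ht => ?_⟩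
  set F := fun s => (Hd + ∑ j, _root_.concatAt a w v s j • H j) * _root_.concatAt a W V s
  have hF : ∀ r ∈ Icc 0 (a + b), IntervalIntegrable F volume 0 r :=
    fun r hr => intervalIntegrable_controlled_mul Hd H (hwm.concatAt hvm) hu hUc hr
  have hleft : ∀ r ∈ Icc 0 a, ∫ s in 0..r, F s = W r - W 0 := by
    intro r hr
    rw [hWeq r hr, add_sub_cancel_left]
    refine intervalIntegral.integral_congr fun s hs => ?_
    rw [uIcc_of_le hr.1] at hs
    simp only [F, concatAt_of_le (hs.2.trans hr.2)]
  rw [concatAt_of_le ha]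
  rcases le_or_gt t a with hta | hat
  · rw [concatAt_of_le hta, hleft t ⟨ht.1, hta⟩]
    abel
  · have hright : ∫ s in a..t, F s = V (t - a) - V 0 := calc
      ∫ s in a..t, F s = ∫ s in a..t, (Hd + ∑ j, v (s - a) j • H j) * V (s - a) := by
        refine intervalIntegral.integral_congr_ae (ae_of_all _ fun s hs => ?_)
        rw [uIoc_of_le hat.le] at hs
        simp only [F, concatAt_of_lt hs.1]
      _ = ∫ s in 0..t - a, (Hd + ∑ j, v s j • H j) * V s := by
        rw [intervalIntegral.integral_comp_sub_right
          (fun s => (Hd + ∑ j, v s j • H j) * V s) a, sub_self]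
      _ = V (t - a) - V 0 := by
        rw [hVeq (t - a) ⟨by linarith, by linarith [ht.2]⟩, add_sub_cancel_left]
    have ha' : a ∈ Icc 0 (a + b) := ⟨ha, by linarith [ht.2]⟩
    rw [concatAt_of_lt hat, ← intervalIntegral.integral_add_adjacent_intervals (hF a ha')
      ((hF a ha').symm.trans (hF t ht)), hleft a ⟨ha, le_rfl⟩, hright, hWV]
    abel

theorem exp_smul_mem_reach1 (v : Fin m → ℝ) {τ t : ℝ} (hτ : 0 ≤ τ) (hτt : τ ≤ t) :
    NormedSpace.exp (τ • (Hd + ∑ j, v j • H j)) ∈ reach1 Hd H 1 t :=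
  ⟨τ, _, τ, isTrajectoryUnreduced_exp Hd H v τ, by simp [NormedSpace.exp_zero], hτ, hτt,
    le_rfl, rfl⟩

theorem one_mem_reach1 {t : ℝ} (ht : 0 ≤ t) : 1 ∈ reach1 Hd H 1 t := by
  simpa using exp_smul_mem_reach1 (Hd := Hd) (H := H) 0 le_rfl ht

theorem mul_mem_reach1 {x y z : Matrix (Fin N) (Fin N) ℂ} {s t : ℝ}
    (hz : z ∈ reach1 Hd H 1 t) (hy : y ∈ reach1 Hd H x s) : z * y ∈ reach1 Hd H x (s + t) := by
  obtain ⟨_, W, s₀, hW, hW0, hs₀, hs₀s, hs₀W, rfl⟩ := hy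
  obtain ⟨_, V, t₀, hV, hV0, ht₀, ht₀t, ht₀V, rfl⟩ := hz
  have hU := (hW.mono hs₀W).concatAt ((hV.mono ht₀V).mul_const (W s₀)) hs₀ (by simp [hV0])
  refine ⟨s₀ + t₀, _, s₀ + t₀, hU, by rw [concatAt_of_le hs₀, hW0], by positivity,
    by linarith, le_rfl, ?_⟩
  rw [concatAt_of_ge (by simp [hV0]) (le_add_of_nonneg_right ht₀), add_sub_cancel_left]

theorem mul_mem_closure_reach1 {x y z : Matrix (Fin N) (Fin N) ℂ} {s t : ℝ}
    (hz : z ∈ closure (reach1 Hd H 1 t)) (hy : y ∈ closure (reach1 Hd H x s)) :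
    z * y ∈ closure (reach1 Hd H x (s + t)) :=
  map_mem_closure₂ continuous_mul hz hy fun _ hz _ hy => mul_mem_reach1 hz hy

theorem exp_mem_closure_reach1 (v : Fin m → ℝ) {t : ℝ} (ht : 0 < t) :
    NormedSpace.exp (∑ j, v j • H j) ∈ closure (reach1 Hd H 1 t) := by
  set B := ∑ j, v j • H j
  have hlim : Filter.Tendsto (fun τ : ℝ => NormedSpace.exp (τ • Hd + B)) (nhdsWithin 0 (Ioi 0))
      (nhds (NormedSpace.exp B)) := by
    have hc : Continuous fun τ : ℝ => NormedSpace.exp (τ • Hd + B) :=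
      Matrix.continuous_exp.comp ((continuous_id.smul continuous_const).add continuous_const)
    simpa using (hc.tendsto 0).mono_left nhdsWithin_le_nhds
  refine mem_closure_of_tendsto hlim ?_
  filter_upwards [Ioo_mem_nhdsGT ht] with τ hτ
  have hrescale : τ • (Hd + ∑ j, (τ⁻¹ * v j) • H j) = τ • Hd + B := by
    simp only [B, smul_add, Finset.smul_sum, smul_smul, mul_inv_cancel_left₀ hτ.1.ne']
  rw [← hrescale]
  exact exp_smul_mem_reach1 _ hτ.1.le hτ.2.le

theorem isClosed_approxReach1 {x : Matrix (Fin N) (Fin N) ℂ} {t : ℝ} :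
    IsClosed (approxReach1 Hd H x t) :=
  isClosed_biInter fun _ _ => isClosed_closure

theorem mul_mem_approxReach1 {x y z : Matrix (Fin N) (Fin N) ℂ} {s t : ℝ}
    (hz : z ∈ approxReach1 Hd H 1 t) (hy : y ∈ approxReach1 Hd H x s) :
    z * y ∈ approxReach1 Hd H x (s + t) := by
  simp only [approxReach1, mem_iInter₂, mem_Ioi] at hz hy ⊢
  intro r hr
  have h := mul_mem_closure_reach1 (hz (t + (r - s - t) / 2) (by linarith))
    (hy (s + (r - s - t) / 2) (by linarith))
  rwa [show s + (r - s - t) / 2 + (t + (r - s - t) / 2) = r by ring] at h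

variable (Hd H) in
def approxReach1Submonoid : Submonoid (Matrix (Fin N) (Fin N) ℂ) where
  carrier := approxReach1 Hd H 1 0
  one_mem' := mem_iInter₂.2 fun _ hs => subset_closure (one_mem_reach1 (le_of_lt hs))
  mul_mem' hz hy := by simpa using mul_mem_approxReach1 hz hy

theorem exp_mem_approxReach1Submonoid (v : Fin m → ℝ) :
    NormedSpace.exp (∑ j, v j • H j) ∈ approxReach1Submonoid Hd H :=
  mem_iInter₂.2 fun _ hs => exp_mem_closure_reach1 v hs

end Trajectory

theorem K_subset_approxReach1_zero_general {N m : ℕ}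
    (Hd : Matrix (Fin N) (Fin N) ℂ)
    (H : Fin m → Matrix (Fin N) (Fin N) ℂ)
    (K : Set (Matrix (Fin N) (Fin N) ℂ))
    (hKgen : K = closure (Submonoid.closure
      {g : Matrix (Fin N) (Fin N) ℂ |
        ∃ v : Fin m → ℝ, g = NormedSpace.exp (∑ j, v j • H j)} :
          Set (Matrix (Fin N) (Fin N) ℂ))) :
    K ⊆ approxReach1 Hd H 1 0 ∧
      ∀ t : ℝ, 0 ≤ t → ∀ z ∈ approxReach1 Hd H 1 t, ∀ k ∈ K,
        z * k ∈ approxReach1 Hd H 1 t := by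
  have hK : K ⊆ approxReach1 Hd H 1 0 := by
    rw [hKgen]
    refine closure_minimal ?_ isClosed_approxReach1
    refine (Submonoid.closure_le (S := approxReach1Submonoid Hd H)).2 ?_
    rintro _ ⟨v, rfl⟩
    exact exp_mem_approxReach1Submonoid v
  refine ⟨hK, fun t _ z hz k hk => ?_⟩
  simpa using mul_mem_approxReach1 hz (hK hk)

/-- **`K` is approximately reachable in zero time.**
`K ⊆ S₁(1,0)`; consequently, if `z ∈ S₁(1,t)` for some `t ≥ 0`, then `z·k ∈ S₁(1,t)`
for every `k ∈ K`. -/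
theorem K_subset_approxReach1_zero {N m : ℕ} (hN : 1 ≤ N) (hm : 1 ≤ m)
    (Hd : Matrix (Fin N) (Fin N) ℂ) (hHd : Hdᴴ = -Hd)
    (H : Fin m → Matrix (Fin N) (Fin N) ℂ) (hH : ∀ j, (H j)ᴴ = -H j)
    (K : Set (Matrix (Fin N) (Fin N) ℂ))
    (hKU : K ⊆ (Matrix.unitaryGroup (Fin N) ℂ : Set (Matrix (Fin N) (Fin N) ℂ)))
    (hK1 : (1 : Matrix (Fin N) (Fin N) ℂ) ∈ K)
    (hKmul : ∀ a ∈ K, ∀ b ∈ K, a * b ∈ K)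
    (hKinv : ∀ k ∈ K, k⁻¹ ∈ K)
    (hKcomp : IsCompact K)
    (hKgen : K = closure (Submonoid.closure
      {g : Matrix (Fin N) (Fin N) ℂ |
        ∃ v : Fin m → ℝ, g = NormedSpace.exp (∑ j, v j • H j)} :
          Set (Matrix (Fin N) (Fin N) ℂ))) :
    K ⊆ approxReach1 Hd H 1 0 ∧
      ∀ t : ℝ, 0 ≤ t → ∀ z ∈ approxReach1 Hd H 1 t, ∀ k ∈ K,
        z * k ∈ approxReach1 Hd H 1 t :=
  K_subset_approxReach1_zero_general Hd H K hKgen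
end
end

section
/- The matrix U is unitary, and conjugation by U, X ↦ U·X·U⁻¹, is a real Lie algebra isomorphism from 𝔨₂ onto so(4); in particular U·𝔨₂·U⁻¹ = so(4). (Hence the subalgebras su(2)⊗su(2) and so(4) of su(4) are conjugate, and SU(4)/(SU(2)⊗SU(2)) is equivariantly identified with SU(4)/SO(4).) -/
open Matrix Complex

/-- The six generators of `𝔨₂ = su(2) ⊗ su(2) ⊆ su(4)`:
`I_x⊗1, 1⊗I_x, I_y⊗1, 1⊗I_y, I_z⊗1, 1⊗I_z` written out as `4 × 4` matrices. -/
def kTwoGenerators : Set (Matrix (Fin 4) (Fin 4) ℂ) :=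
  { !![0, 0, 1, 0; 0, 0, 0, 1; -1, 0, 0, 0; 0, -1, 0, 0],
    !![0, 1, 0, 0; -1, 0, 0, 0; 0, 0, 0, 1; 0, 0, -1, 0],
    !![0, 0, I, 0; 0, 0, 0, I; I, 0, 0, 0; 0, I, 0, 0],
    !![0, I, 0, 0; I, 0, 0, 0; 0, 0, 0, I; 0, 0, I, 0],
    !![I, 0, 0, 0; 0, I, 0, 0; 0, 0, -I, 0; 0, 0, 0, -I],
    !![I, 0, 0, 0; 0, -I, 0, 0; 0, 0, I, 0; 0, 0, 0, -I] }

/-- The Lie algebra `𝔨₂`, the real span of the six generators above. -/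
noncomputable def kTwo : Submodule ℝ (Matrix (Fin 4) (Fin 4) ℂ) :=
  Submodule.span ℝ kTwoGenerators

/-- The Lie algebra `so(4)` of real skew-symmetric matrices inside `su(4)`. -/
def soFour : Set (Matrix (Fin 4) (Fin 4) ℂ) :=
  {X | Xᴴ = -X ∧ X.trace = 0 ∧ Xᵀ = -X}

/-- The unitary matrix `U` conjugating `𝔨₂` onto `so(4)`. -/
noncomputable def conjU : Matrix (Fin 4) (Fin 4) ℂ :=
  ((Real.sqrt 2 : ℂ))⁻¹ •
    !![1, 0, 0, 1; 0, 1, -1, 0; I, 0, 0, -I; 0, I, I, 0]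

/-!
Conjugation by the unitary `U` is a ring automorphism of `M₄(ℂ)`, so it preserves commutators
and is injective; being `ℝ`-linear, it maps the span `𝔨₂` of the six generators onto the span of
their six images. These images are real skew-symmetric matrices, and a real skew-symmetric
`4 × 4` matrix has six free entries above the diagonal, which are recovered as explicit
combinations of the images, so their span is all of `so(4)`.
-/

section Conjugation

variable {R : Type*} [Ring R] {u v : R}

theorem conj_mul_conj_of_mul_eq_one (h : v * u = 1) (x y : R) :
    u * x * v * (u * y * v) = u * (x * y) * v := by
  calc u * x * v * (u * y * v) = u * x * (v * u) * y * v := by simp only [mul_assoc]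
    _ = u * (x * y) * v := by rw [h, mul_one]; simp only [mul_assoc]

theorem conj_commutator_of_mul_eq_one (h : v * u = 1) (x y : R) :
    u * (x * y - y * x) * v = u * x * v * (u * y * v) - u * y * v * (u * x * v) := by
  rw [conj_mul_conj_of_mul_eq_one h, conj_mul_conj_of_mul_eq_one h, mul_sub, sub_mul]

theorem conj_injective_of_mul_eq_one (h : v * u = 1) : Function.Injective fun x => u * x * v :=
  Function.LeftInverse.injective (g := fun y => v * y * u) fun x => by
    simp only [← mul_assoc, h, one_mul]
    rw [mul_assoc, h, mul_one]

theorem conj_eq_of_mul_eq_mul (h : u * v = 1) {x y : R} (hxy : u * x = y * u) : u * x * v = y := by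
  rw [hxy, mul_assoc, h, mul_one]

theorem image_conj_span {K A : Type*} [CommSemiring K] [Semiring A] [Algebra K A] (u v : A)
    (s : Set A) :
    (fun x => u * x * v) '' (Submodule.span K s : Set A) =
      Submodule.span K ((fun x => u * x * v) '' s) := by
  have := Submodule.span_image (R := K) (LinearMap.mulLeftRight K (u, v)) (s := s)
  exact ((congrArg SetLike.coe this).trans (Submodule.map_coe _ _)).symm

end Conjugation

theorem conjU_mem_unitaryGroup : conjU ∈ unitaryGroup (Fin 4) ℂ := by
  have hA : !![1, 0, 0, 1; 0, 1, -1, 0; I, 0, 0, -I; 0, I, I, 0] *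
      star !![1, 0, 0, 1; 0, 1, -1, 0; I, 0, 0, -I; 0, I, I, 0] = (2 : ℂ) • 1 := by
    ext i j
    fin_cases i <;> fin_cases j <;> simp [mul_apply, Fin.sum_univ_four, one_add_one_eq_two]
  have hc : ((Real.sqrt 2 : ℂ))⁻¹ * star ((Real.sqrt 2 : ℂ))⁻¹ * 2 = 1 := by
    rw [star_inv₀, Complex.star_def, Complex.conj_ofReal, ← mul_inv, ← Complex.ofReal_mul,
      Real.mul_self_sqrt zero_le_two]
    norm_num
  rw [mem_unitaryGroup_iff, conjU, star_smul, smul_mul_smul_comm, hA, smul_smul, hc, one_smul]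

theorem conjU_inv : conjU⁻¹ = star conjU :=
  inv_eq_left_inv (Unitary.star_mul_self_of_mem conjU_mem_unitaryGroup)

def soSubmodule (n : Type*) [Fintype n] : Submodule ℝ (Matrix n n ℂ) where
  carrier := {X | Xᴴ = -X ∧ X.trace = 0 ∧ Xᵀ = -X}
  add_mem' := by
    rintro X Y ⟨hX, hXt, hXT⟩ ⟨hY, hYt, hYT⟩
    exact ⟨by rw [conjTranspose_add, hX, hY, neg_add], by rw [trace_add, hXt, hYt, add_zero],
      by rw [transpose_add, hXT, hYT, neg_add]⟩
  zero_mem' := by simp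
  smul_mem' := by
    rintro r X ⟨hX, hXt, hXT⟩
    exact ⟨by rw [conjTranspose_smul, hX, star_trivial, smul_neg],
      by rw [trace_smul, hXt, smul_zero], by rw [transpose_smul, hXT, smul_neg]⟩

def realSkew (a b c d e f : ℝ) : Matrix (Fin 4) (Fin 4) ℂ :=
  !![0, a, b, c; -a, 0, d, e; -b, -d, 0, f; -c, -e, -f, 0]

theorem mem_soFour_iff {X : Matrix (Fin 4) (Fin 4) ℂ} :
    X ∈ soFour ↔ ∃ a b c d e f : ℝ, X = realSkew a b c d e f := by
  constructor
  · rintro ⟨hH, -, hT⟩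
    have hskew (i j : Fin 4) : X j i = -X i j := by
      simpa using congrFun (congrFun hT i) j
    have hdiag (i : Fin 4) : X i i = 0 := by
      linear_combination hskew i i / 2
    have hreal (i j : Fin 4) : ((X i j).re : ℂ) = X i j := by
      refine Complex.conj_eq_iff_re.mp ?_
      simpa using congrFun (congrFun (hH.trans hT.symm) j) i
    refine ⟨(X 0 1).re, (X 0 2).re, (X 0 3).re, (X 1 2).re, (X 1 3).re, (X 2 3).re, ?_⟩
    ext i j
    fin_cases i <;> fin_cases j <;> simp [realSkew, hreal, hdiag] <;> exact hskew _ _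
  · rintro ⟨a, b, c, d, e, f, rfl⟩
    refine ⟨?_, ?_, ?_⟩
    · ext i j
      fin_cases i <;> fin_cases j <;> simp [realSkew]
    · simp [realSkew, trace, Fin.sum_univ_four]
    · ext i j
      fin_cases i <;> fin_cases j <;> simp [realSkew]

theorem realSkew_eq_sum (a b c d e f : ℝ) :
    realSkew a b c d e f =
      ((f - a) / 2) • realSkew (-1) 0 0 0 0 1 + ((a + f) / 2) • realSkew 1 0 0 0 0 1 +
      ((c - d) / 2) • realSkew 0 0 1 (-1) 0 0 + ((c + d) / 2) • realSkew 0 0 1 1 0 0 +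
      ((b + e) / 2) • realSkew 0 1 0 0 1 0 + ((b - e) / 2) • realSkew 0 1 0 0 (-1) 0 := by
  ext i j
  fin_cases i <;> fin_cases j <;> simp [realSkew] <;> ring

def soFourGenerators : Set (Matrix (Fin 4) (Fin 4) ℂ) :=
  {realSkew (-1) 0 0 0 0 1, realSkew 1 0 0 0 0 1, realSkew 0 0 1 (-1) 0 0,
    realSkew 0 0 1 1 0 0, realSkew 0 1 0 0 1 0, realSkew 0 1 0 0 (-1) 0}

theorem coe_span_soFourGenerators :
    (Submodule.span ℝ soFourGenerators : Set (Matrix (Fin 4) (Fin 4) ℂ)) = soFour := by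
  apply Set.Subset.antisymm
  · show _ ≤ soSubmodule (Fin 4)
    rw [Submodule.span_le]
    rintro X (rfl | rfl | rfl | rfl | rfl | rfl) <;>
      exact mem_soFour_iff.mpr ⟨_, _, _, _, _, _, rfl⟩
  · intro X hX
    obtain ⟨a, b, c, d, e, f, rfl⟩ := mem_soFour_iff.mp hX
    rw [SetLike.mem_coe, realSkew_eq_sum a b c d e f]
    refine add_mem (add_mem (add_mem (add_mem (add_mem ?_ ?_) ?_) ?_) ?_) ?_ <;>
      exact Submodule.smul_mem _ _ (Submodule.subset_span (by simp [soFourGenerators]))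

theorem image_conjU_kTwoGenerators :
    (fun X => conjU * X * conjU⁻¹) '' kTwoGenerators = soFourGenerators := by
  have h : conjU * conjU⁻¹ = 1 :=
    conjU_inv ▸ Unitary.mul_star_self_of_mem conjU_mem_unitaryGroup
  simp only [kTwoGenerators, soFourGenerators, Set.image_insert_eq, Set.image_singleton]
  rw [conj_eq_of_mul_eq_mul h (y := realSkew (-1) 0 0 0 0 1) ?g1,
    conj_eq_of_mul_eq_mul h (y := realSkew 1 0 0 0 0 1) ?g2,
    conj_eq_of_mul_eq_mul h (y := realSkew 0 0 1 (-1) 0 0) ?g3,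
    conj_eq_of_mul_eq_mul h (y := realSkew 0 0 1 1 0 0) ?g4,
    conj_eq_of_mul_eq_mul h (y := realSkew 0 1 0 0 1 0) ?g5,
    conj_eq_of_mul_eq_mul h (y := realSkew 0 1 0 0 (-1) 0) ?g6]
  -- `U X U⁻¹ = Y` is checked as `U X = Y U`, where the scalar `1/√2` of `U` cancels.
  all_goals
    rw [conjU, Matrix.smul_mul, Matrix.mul_smul]
    congr 1
    ext i j
    fin_cases i <;> fin_cases j <;> simp [realSkew, mul_apply, Fin.sum_univ_four]

/-- **Conjugation of `su(2)⊗su(2)` onto `so(4)`.**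
The matrix `U = (1/√2)·[[1,0,0,1],[0,1,−1,0],[i,0,0,−i],[0,i,i,0]]` is unitary, conjugation
`X ↦ U·X·U⁻¹` preserves the commutator bracket, and it maps `𝔨₂` bijectively onto `so(4)`. -/
theorem kTwo_conj_soFour :
    conjU ∈ Matrix.unitaryGroup (Fin 4) ℂ ∧
    (∀ X Y : Matrix (Fin 4) (Fin 4) ℂ,
      conjU * (X * Y - Y * X) * conjU⁻¹ =
        (conjU * X * conjU⁻¹) * (conjU * Y * conjU⁻¹)
          - (conjU * Y * conjU⁻¹) * (conjU * X * conjU⁻¹)) ∧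
    Set.InjOn (fun X => conjU * X * conjU⁻¹) (kTwo : Set (Matrix (Fin 4) (Fin 4) ℂ)) ∧
    (fun X => conjU * X * conjU⁻¹) '' (kTwo : Set (Matrix (Fin 4) (Fin 4) ℂ)) = soFour := by
  have hleft : conjU⁻¹ * conjU = 1 :=
    conjU_inv ▸ Unitary.star_mul_self_of_mem conjU_mem_unitaryGroup
  refine ⟨conjU_mem_unitaryGroup, conj_commutator_of_mul_eq_one hleft,
    (conj_injective_of_mul_eq_one hleft).injOn, ?_⟩
  rw [kTwo, image_conj_span, image_conjU_kTwoGenerators, coe_span_soFourGenerators]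
end
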